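/- arXiv:1212.1337 — 4 statements merged into one kernel-verified Lean document; each statement's English description precedes it below -/
import Mathlib

section
/- For fixed x > 0, the function ν ↦ ((1+ν)²/2)·(1+x)/((x+ν)(1+νx)) is non-increasing on [0,1]. -/
theorem stmt_3 (x : ℝ) (hx : 0 < x) :
    AntitoneOn (fun ν : ℝ => ((1 + ν) ^ 2 / 2) * (1 + x) / ((x + ν) * (1 + ν * x)))
      (Set.Icc 0 1) := by
  rintro a ⟨ha0, ha1⟩ b ⟨hb0, hb1⟩ hab
  have h1 : 0 < (x + a) * (1 + a * x) := by positivity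
  have h2 : 0 < (x + b) * (1 + b * x) := by positivity
  simp only
  rw [div_le_div_iff₀ h2 h1]
  nlinarith [mul_nonneg (mul_nonneg (sub_nonneg.2 hab) (sq_nonneg (1 - x)))
      (mul_nonneg (sub_nonneg.2 ha1) hb0),
    mul_nonneg (mul_nonneg (sub_nonneg.2 hab) (sq_nonneg (1 - x)))
      (sub_nonneg.2 (mul_le_one₀ ha1 hb0 hb1)), hx.le]
end

section
/- For α ∈ (0,1), the function t ↦ sinh(αt)/sinh(t) (extended by its limit α at t=0) is positive definite on ℝ. -/
/-!
Euler's product `sinh x = x ∏ⱼ (1 + (x / cⱼ)²)`, `cⱼ = π (j+1)`, exhibits `sinh (α t) / sinh t`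
as the pointwise limit of `α ∏_{j<n} (1 + (α t / cⱼ)²) / (1 + (t / cⱼ)²)`. Each factor is
`α² + (1 - α²) c (c / (c² + t²))` with `c = cⱼ`, and the Cauchy kernel
`c / (c² + t²) = ∫₀^∞ e^{-cu} cos (u t) du` is a mixture of the positive definite kernels
`cos (u ·)`. Positive semidefinite kernels form a closed convex cone that is stable under
products (Schur), so the limit is positive definite. Continuity at `0` comes from writing the
function as `α D(α t) / D(t)` with `D = dslope sinh 0` continuous and nonvanishing.
-/

/-- A continuous function `h : ℝ → ℝ` is positive definite if for all finite families
`t : Fin d → ℝ`, the matrix `[h (t i - t j)]` is positive semi-definite. -/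
def IsPosDefFn (h : ℝ → ℝ) : Prop :=
  Continuous h ∧
    ∀ (d : ℕ) (t : Fin d → ℝ), (Matrix.of fun i j => h (t i - t j)).PosSemidef

open Real MeasureTheory Set Filter Matrix Topology
open scoped ComplexOrder

theorem Matrix.isClosed_setOf_posSemidef {𝕜 : Type*} [RCLike 𝕜] (n : Type*) [Fintype n] :
    IsClosed {M : Matrix n n 𝕜 | M.PosSemidef} := by
  simp only [posSemidef_iff_dotProduct_mulVec, ofPred_and, ofPred_forall]
  refine .inter (isClosed_eq (by fun_prop) continuous_id) (isClosed_iInter fun x => ?_)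
  exact isClosed_le continuous_const
    (continuous_const.dotProduct (continuous_id.matrix_mulVec continuous_const))

lemma re_exp_neg_mul_add_mul_I (c s u : ℝ) :
    (Complex.exp ((-c + s * Complex.I) * u)).re = exp (-c * u) * cos (u * s) := by
  rw [show ((-c + s * Complex.I) * u : ℂ) = ((-c * u : ℝ) : ℂ) + ((u * s : ℝ) : ℂ) * Complex.I by
    push_cast; ring, Complex.exp_re]
  simp

lemma integrableOn_exp_neg_mul_mul_cos {c : ℝ} (hc : 0 < c) (s : ℝ) :
    IntegrableOn (fun u => exp (-c * u) * cos (u * s)) (Ioi 0) := by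
  have ha : (-c + s * Complex.I).re < 0 := by simpa using hc
  have h := (integrableOn_exp_mul_complex_Ioi ha 0).re
  simp only [RCLike.re_to_complex, re_exp_neg_mul_add_mul_I] at h
  exact h

lemma integral_exp_neg_mul_mul_cos {c : ℝ} (hc : 0 < c) (s : ℝ) :
    ∫ u in Ioi 0, exp (-c * u) * cos (u * s) = c / (c ^ 2 + s ^ 2) := by
  have ha : (-c + s * Complex.I).re < 0 := by simpa using hc
  have h := integral_re (integrableOn_exp_mul_complex_Ioi ha 0)
  simp only [RCLike.re_to_complex, re_exp_neg_mul_add_mul_I,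
    integral_exp_mul_complex_Ioi ha] at h
  rw [h]
  simp [Complex.div_re, Complex.normSq_apply]
  field_simp

def IsPosSemidefKernel (h : ℝ → ℝ) : Prop :=
  ∀ (d : ℕ) (t : Fin d → ℝ), (Matrix.of fun i j => h (t i - t j)).PosSemidef

namespace IsPosSemidefKernel

variable {f g : ℝ → ℝ}

lemma const {a : ℝ} (ha : 0 ≤ a) : IsPosSemidefKernel fun _ => a := by
  intro d t
  have : (Matrix.of fun _ _ => a : Matrix (Fin d) (Fin d) ℝ) = a • vecMulVec 1 (star 1) := by
    ext; simp [vecMulVec]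
  rw [this]
  exact (posSemidef_vecMulVec_self_star 1).smul ha

lemma add (hf : IsPosSemidefKernel f) (hg : IsPosSemidefKernel g) :
    IsPosSemidefKernel fun s => f s + g s :=
  fun d t => (hf d t).add (hg d t)

lemma const_mul {a : ℝ} (ha : 0 ≤ a) (hf : IsPosSemidefKernel f) :
    IsPosSemidefKernel fun s => a * f s :=
  fun d t => (hf d t).smul ha

lemma mul (hf : IsPosSemidefKernel f) (hg : IsPosSemidefKernel g) :
    IsPosSemidefKernel fun s => f s * g s :=
  fun d t => (hf d t).hadamard (hg d t)

lemma prod {ι : Type*} (s : Finset ι) {F : ι → ℝ → ℝ}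
    (hF : ∀ i ∈ s, IsPosSemidefKernel (F i)) :
    IsPosSemidefKernel fun x => ∏ i ∈ s, F i x := by
  rw [← Finset.prod_fn]
  exact Finset.prod_induction F IsPosSemidefKernel (fun _ _ => mul) (const zero_le_one) hF

lemma of_tendsto {F : ℕ → ℝ → ℝ} (hF : ∀ n, IsPosSemidefKernel (F n))
    (hlim : ∀ s, Tendsto (fun n => F n s) atTop (𝓝 (f s))) : IsPosSemidefKernel f := by
  intro d t
  have hM : Tendsto (fun n => Matrix.of fun i j => F n (t i - t j)) atTop
      (𝓝 (Matrix.of fun i j => f (t i - t j))) :=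
    tendsto_pi_nhds.2 fun i => tendsto_pi_nhds.2 fun j => hlim (t i - t j)
  exact (isClosed_setOf_posSemidef (Fin d)).mem_of_tendsto hM (.of_forall fun n => hF n d t)

lemma integral {Ω : Type*} [MeasurableSpace Ω] {μ : Measure Ω} {F : Ω → ℝ → ℝ}
    (hF : ∀ u, IsPosSemidefKernel (F u)) (hint : ∀ s, Integrable (fun u => F u s) μ) :
    IsPosSemidefKernel fun s => ∫ u, F u s ∂μ := by
  intro d t
  refine posSemidef_iff_dotProduct_mulVec.2 ⟨?_, fun x => ?_⟩
  · ext i j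
    simpa using integral_congr_ae (.of_forall fun u => (hF u d t).isHermitian.apply i j)
  · have : star x ⬝ᵥ (of (fun i j => ∫ u, F u (t i - t j) ∂μ) *ᵥ x)
        = ∫ u, star x ⬝ᵥ (of (fun i j => F u (t i - t j)) *ᵥ x) ∂μ := by
      simp only [dotProduct, mulVec, of_apply, star_trivial]
      rw [integral_finsetSum _ fun i _ => ((integrable_finsetSum _ fun j _ =>
        (hint _).mul_const _).const_mul _)]
      refine Finset.sum_congr rfl fun i _ => ?_
      rw [integral_const_mul, integral_finsetSum _ fun j _ => (hint _).mul_const _]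
      simp only [integral_mul_const]
    rw [this]
    exact integral_nonneg fun u => (hF u d t).dotProduct_mulVec_nonneg x

lemma cos_mul (c : ℝ) : IsPosSemidefKernel fun s => cos (c * s) := by
  intro d t
  have : (Matrix.of fun i j => cos (c * (t i - t j)))
      = vecMulVec (fun i => cos (c * t i)) (star fun i => cos (c * t i))
        + vecMulVec (fun i => sin (c * t i)) (star fun i => sin (c * t i)) := by
    ext i j
    simp [vecMulVec, mul_sub, cos_sub]
  rw [this]
  exact (posSemidef_vecMulVec_self_star _).add (posSemidef_vecMulVec_self_star _)

lemma div_sq_add_sq {c : ℝ} (hc : 0 < c) :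
    IsPosSemidefKernel fun s => c / (c ^ 2 + s ^ 2) := by
  have h := integral (μ := volume.restrict (Ioi 0))
    (F := fun u s => exp (-c * u) * cos (u * s))
    (fun u => (cos_mul u).const_mul (exp_pos _).le) (integrableOn_exp_neg_mul_mul_cos hc)
  simpa only [integral_exp_neg_mul_mul_cos hc] using h

lemma one_add_sq_div_one_add_sq {α c : ℝ} (hα : α ^ 2 ≤ 1) (hc : 0 < c) :
    IsPosSemidefKernel fun s => (1 + (α * s / c) ^ 2) / (1 + (s / c) ^ 2) := by
  have hsplit : ∀ s, (1 + (α * s / c) ^ 2) / (1 + (s / c) ^ 2)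
      = α ^ 2 + (1 - α ^ 2) * c * (c / (c ^ 2 + s ^ 2)) := by
    intro s
    field_simp
    ring
  simp only [hsplit]
  exact (const (sq_nonneg α)).add ((div_sq_add_sq hc).const_mul (by nlinarith))

end IsPosSemidefKernel

theorem Real.tendsto_euler_sinh_prod (x : ℝ) :
    Tendsto (fun n : ℕ => x * ∏ j ∈ Finset.range n, (1 + (x / (π * (j + 1))) ^ 2))
      atTop (𝓝 (sinh x)) := by
  have h := Complex.tendsto_euler_sin_prod (x * Complex.I / π)
  have hπ : (π : ℂ) ≠ 0 := by exact_mod_cast pi_ne_zero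
  have hfactor : ∀ j : ℕ, 1 - (x * Complex.I / π) ^ 2 / ((j : ℂ) + 1) ^ 2
      = 1 + (x / (π * (j + 1))) ^ 2 := by
    intro j
    have : (j : ℂ) + 1 ≠ 0 := by exact_mod_cast j.succ_ne_zero
    field_simp
    rw [Complex.I_sq]
    ring
  have hseq : ∀ n : ℕ, π * (x * Complex.I / π) *
        ∏ j ∈ Finset.range n, (1 - (x * Complex.I / π) ^ 2 / ((j : ℂ) + 1) ^ 2)
      = ((x * ∏ j ∈ Finset.range n, (1 + (x / (π * (j + 1))) ^ 2) : ℝ) : ℂ) * Complex.I := by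
    intro n
    rw [mul_div_cancel₀ _ hπ, Finset.prod_congr rfl fun j _ => hfactor j]
    push_cast
    ring
  have hlim : Complex.sin (π * (x * Complex.I / π)) = (sinh x : ℂ) * Complex.I := by
    rw [mul_div_cancel₀ _ hπ, Complex.sin_mul_I, Complex.ofReal_sinh]
  simp only [hseq, hlim] at h
  have him := (Complex.continuous_im.tendsto _).comp h
  simp only [Function.comp_def, Complex.mul_I_im, Complex.ofReal_re] at him
  exact him

theorem tendsto_euler_sinh_mul_div_sinh_prod (α s : ℝ) :
    Tendsto (fun n : ℕ => α * ∏ j ∈ Finset.range n,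
        (1 + (α * s / (π * (j + 1))) ^ 2) / (1 + (s / (π * (j + 1))) ^ 2))
      atTop (𝓝 (if s = 0 then α else sinh (α * s) / sinh s)) := by
  rcases eq_or_ne s 0 with rfl | hs
  · simp
  rw [if_neg hs]
  refine ((tendsto_euler_sinh_prod (α * s)).div (tendsto_euler_sinh_prod s)
    (sinh_ne_zero.2 hs)).congr fun n => ?_
  have : ∏ j ∈ Finset.range n, (1 + (s / (π * (j + 1))) ^ 2) ≠ 0 :=
    Finset.prod_ne_zero_iff.2 fun j _ => by positivity
  rw [Pi.div_apply, Finset.prod_div_distrib]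
  field_simp

theorem isPosSemidefKernel_sinh_mul_div_sinh {α : ℝ} (h0 : 0 ≤ α) (h1 : α ≤ 1) :
    IsPosSemidefKernel fun t => if t = 0 then α else sinh (α * t) / sinh t :=
  .of_tendsto (fun n => (IsPosSemidefKernel.prod _ fun j _ =>
    .one_add_sq_div_one_add_sq (by nlinarith) (by positivity)).const_mul h0)
    (tendsto_euler_sinh_mul_div_sinh_prod α)

theorem continuous_dslope_sinh : Continuous (dslope sinh 0) := by
  refine continuous_iff_continuousAt.2 fun x => ?_
  rcases eq_or_ne x 0 with rfl | hx
  · exact continuousAt_dslope_same.2 differentiable_sinh.differentiableAt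
  · exact (continuousAt_dslope_of_ne hx).2 continuous_sinh.continuousAt

theorem dslope_sinh_ne_zero (x : ℝ) : dslope sinh 0 x ≠ 0 := by
  rcases eq_or_ne x 0 with rfl | hx
  · simp [dslope_same]
  · simp [dslope_of_ne _ hx, slope_def_field, hx]

theorem sinh_mul_div_sinh_eq_dslope (α t : ℝ) :
    (if t = 0 then α else sinh (α * t) / sinh t)
      = α * dslope sinh 0 (α * t) / dslope sinh 0 t := by
  rcases eq_or_ne t 0 with rfl | ht
  · simp
  rcases eq_or_ne α 0 with rfl | hα
  · simp [ht]
  have hαt : α * t ≠ 0 := mul_ne_zero hα ht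
  simp only [if_neg ht, dslope_of_ne _ ht, dslope_of_ne _ hαt, slope_def_field, sinh_zero,
    sub_zero]
  field_simp

theorem continuous_sinh_mul_div_sinh (α : ℝ) :
    Continuous fun t => if t = 0 then α else sinh (α * t) / sinh t := by
  simp only [sinh_mul_div_sinh_eq_dslope]
  have hnum : Continuous fun t => α * dslope sinh 0 (α * t) :=
    continuous_const.mul (continuous_dslope_sinh.comp (continuous_const.mul continuous_id))
  exact hnum.div continuous_dslope_sinh dslope_sinh_ne_zero

theorem stmt_7 (α : ℝ) (hα : α ∈ Set.Ioo (0 : ℝ) 1) :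
    IsPosDefFn (fun t => if t = 0 then α else Real.sinh (α * t) / Real.sinh t) :=
  ⟨continuous_sinh_mul_div_sinh α, isPosSemidefKernel_sinh_mul_div_sinh hα.1.le hα.2.le⟩
end

section
/- For t ∈ ℝ, the function g(t) = (3/4)·sinh²(t)/(sinh(3t/2)·sinh(t/2)) (extended continuously at 0) satisfies the identity g(t) = (3/4)·(1 + (1/2)/(cosh t + 1/2)), and is therefore positive definite on ℝ. -/
/-!
Writing `t = 2u`, the identities `sinh 3u = sinh u (4 sinh² u + 3)` and `sinh 2u = 2 sinh u cosh u`
give `g t = 3/4 + (3/4) · (1/2) / (cosh t + 1/2)`. Positive definiteness of the second summand is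
checked on quadratic forms: with `x = eᵃ`, `y = eᵇ` and `r = xy / (x + y)²` one has
`(1/2) / (cosh (a - b) + 1/2) = xy / (x² + xy + y²) = ∑_{n ≥ 1} rⁿ`, and each kernel
`rⁿ = xⁿ yⁿ (x + y)⁻²ⁿ` is positive semidefinite because `(x + y)⁻ᵃ` is a Laplace transform,
`Γ(a) (x + y)⁻ᵃ = ∫₀^∞ uᵃ⁻¹ e^{-xu} e^{-yu} du`.
-/

open Real MeasureTheory Set Finset

section QuadraticForms

variable {ι : Type*} [Fintype ι]

theorem sum_sum_mul_add_rpow_neg_nonneg (x v : ι → ℝ) (hx : ∀ i, 0 < x i) {a : ℝ}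
    (ha : 0 < a) : 0 ≤ ∑ i, ∑ j, v i * v j * (x i + x j) ^ (-a) := by
  have hxx : ∀ i j, 0 < x i + x j := fun i j => add_pos (hx i) (hx j)
  have hint : ∀ i j, IntegrableOn (fun u => v i * v j * (u ^ (a - 1) * exp (-((x i + x j) * u))))
      (Ioi 0) := fun i j =>
    IntegrableOn.congr_fun ((integrableOn_rpow_mul_exp_neg_mul_rpow (by linarith : -1 < a - 1)
      one_pos (hxx i j)).const_mul (v i * v j))
      (fun u _ => by simp only [rpow_one, neg_mul]) measurableSet_Ioi
  have hLaplace : Gamma a * ∑ i, ∑ j, v i * v j * (x i + x j) ^ (-a)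
      = ∫ u in Ioi 0, u ^ (a - 1) * (∑ i, v i * exp (-(x i * u))) ^ 2 := by
    calc Gamma a * ∑ i, ∑ j, v i * v j * (x i + x j) ^ (-a)
        = ∑ i, ∑ j, ∫ u in Ioi 0, v i * v j * (u ^ (a - 1) * exp (-((x i + x j) * u))) := by
          simp only [mul_sum, integral_const_mul, integral_rpow_mul_exp_neg_mul_Ioi ha (hxx _ _),
            rpow_neg (hxx _ _).le, one_div, inv_rpow (hxx _ _).le]
          exact sum_congr rfl fun i _ => sum_congr rfl fun j _ => by ring
      _ = ∫ u in Ioi 0, ∑ i, ∑ j, v i * v j * (u ^ (a - 1) * exp (-((x i + x j) * u))) := by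
          rw [integral_finsetSum _ fun i _ => integrable_finsetSum _ fun j _ => hint i j]
          exact sum_congr rfl fun i _ => (integral_finsetSum _ fun j _ => hint i j).symm
      _ = ∫ u in Ioi 0, u ^ (a - 1) * (∑ i, v i * exp (-(x i * u))) ^ 2 := by
          congr 1
          ext u
          rw [sq, sum_mul_sum, mul_sum]
          refine sum_congr rfl fun i _ => ?_
          rw [mul_sum]
          refine sum_congr rfl fun j _ => ?_
          rw [add_mul, neg_add, exp_add]
          ring
  refine nonneg_of_mul_nonneg_right ?_ (Gamma_pos_of_pos ha)
  rw [hLaplace]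
  exact setIntegral_nonneg measurableSet_Ioi fun u hu =>
    mul_nonneg (rpow_nonneg (le_of_lt hu) _) (sq_nonneg _)

theorem sum_sum_mul_div_add_sq_pow_succ_nonneg (x c : ι → ℝ) (hx : ∀ i, 0 < x i) (n : ℕ) :
    0 ≤ ∑ i, ∑ j, c i * c j * (x i * x j / (x i + x j) ^ 2) ^ (n + 1) := by
  refine (sum_sum_mul_add_rpow_neg_nonneg x (fun i => c i * x i ^ (n + 1)) hx
    (a := (2 * (n + 1) : ℕ)) (by positivity)).trans_eq
    (sum_congr rfl fun i _ => sum_congr rfl fun j _ => ?_)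
  rw [rpow_neg (add_pos (hx i) (hx j)).le, rpow_natCast, pow_mul, div_pow, mul_pow,
    div_eq_mul_inv]
  ring

theorem hasSum_div_add_sq_pow_succ {x y : ℝ} (hx : 0 < x) (hy : 0 < y) :
    HasSum (fun n : ℕ => (x * y / (x + y) ^ 2) ^ (n + 1)) (x * y / (x ^ 2 + x * y + y ^ 2)) := by
  set r := x * y / (x + y) ^ 2 with hr
  have hr_lt : r < 1 := by
    rw [hr, div_lt_one (by positivity)]
    nlinarith
  have hgeom : r * (1 - r)⁻¹ = x * y / (x ^ 2 + x * y + y ^ 2) := by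
    have : (x + y) ^ 2 - x * y ≠ 0 := by nlinarith
    rw [hr, one_sub_div (by positivity)]
    field_simp
    ring
  simpa only [← pow_succ', hgeom] using
    (hasSum_geometric_of_lt_one (by positivity) hr_lt).mul_left r

theorem sum_sum_mul_div_sq_add_mul_add_sq_nonneg (x c : ι → ℝ) (hx : ∀ i, 0 < x i) :
    0 ≤ ∑ i, ∑ j, c i * c j * (x i * x j / (x i ^ 2 + x i * x j + x j ^ 2)) :=
  (hasSum_sum fun i _ => hasSum_sum fun j _ =>
    (hasSum_div_add_sq_pow_succ (hx i) (hx j)).mul_left (c i * c j)).nonneg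
    fun n => sum_sum_mul_div_add_sq_pow_succ_nonneg x c hx n

end QuadraticForms

theorem isPosDefFn_of_sum_sum_nonneg {h : ℝ → ℝ} (hc : Continuous h) (heven : ∀ t, h (-t) = h t)
    (hq : ∀ (d : ℕ) (t c : Fin d → ℝ), 0 ≤ ∑ i, ∑ j, c i * c j * h (t i - t j)) :
    IsPosDefFn h := by
  refine ⟨hc, fun d t => .of_dotProduct_mulVec_nonneg ?_ fun c => ?_⟩
  · ext i j
    simp only [Matrix.conjTranspose_apply, Matrix.of_apply, star_trivial]
    rw [← neg_sub, heven]
  · refine (hq d t c).trans_eq ?_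
    simp only [dotProduct, Matrix.mulVec, Matrix.of_apply, star_trivial, mul_sum]
    exact sum_congr rfl fun i _ => sum_congr rfl fun j _ => by ring

theorem one_half_div_cosh_sub_add_one_half (a b : ℝ) :
    1 / 2 / (cosh (a - b) + 1 / 2) = exp a * exp b / (exp a ^ 2 + exp a * exp b + exp b ^ 2) := by
  rw [cosh_eq, exp_sub, neg_sub, exp_sub]
  field_simp
  ring

theorem three_quarters_mul_sinh_sq_div {t : ℝ} (ht : t ≠ 0) :
    3 / 4 * sinh t ^ 2 / (sinh (3 * t / 2) * sinh (t / 2))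
      = 3 / 4 * (1 + 1 / 2 / (cosh t + 1 / 2)) := by
  obtain ⟨u, rfl⟩ : ∃ u, t = 2 * u := ⟨t / 2, by ring⟩
  have hu : sinh u ≠ 0 := sinh_ne_zero.2 (by rintro rfl; simp at ht)
  rw [show 3 * (2 * u) / 2 = 3 * u by ring, show 2 * u / 2 = u by ring, sinh_three_mul,
    sinh_two_mul, cosh_two_mul]
  have : 4 * sinh u ^ 2 + 3 ≠ 0 := by positivity
  field_simp
  rw [cosh_sq]
  ring

theorem stmt_11 (g : ℝ → ℝ)
    (hg : ∀ t, g t = if t = 0 then 1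
        else (3 / 4) * (Real.sinh t) ^ 2 / (Real.sinh (3 * t / 2) * Real.sinh (t / 2))) :
    (∀ t, g t = (3 / 4) * (1 + (1 / 2) / (Real.cosh t + 1 / 2))) ∧ IsPosDefFn g := by
  have closed : ∀ t, g t = 3 / 4 * (1 + 1 / 2 / (cosh t + 1 / 2)) := fun t => by
    rw [hg t]
    split_ifs with ht
    · norm_num [ht]
    · exact three_quarters_mul_sinh_sq_div ht
  refine ⟨closed, isPosDefFn_of_sum_sum_nonneg ?_ ?_ fun d t c => ?_⟩
  · rw [funext closed]
    fun_prop (disch := exact fun t => by positivity)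
  · simp only [closed, cosh_neg, implies_true]
  · have hK := sum_sum_mul_div_sq_add_mul_add_sq_nonneg (fun i => exp (t i)) c fun i => exp_pos _
    calc 0 ≤ 3 / 4 * (∑ i, c i) ^ 2
          + 3 / 4 * ∑ i, ∑ j, c i * c j * (exp (t i) * exp (t j)
            / (exp (t i) ^ 2 + exp (t i) * exp (t j) + exp (t j) ^ 2)) :=
          add_nonneg (by positivity) (mul_nonneg (by norm_num) hK)
      _ = ∑ i, ∑ j, c i * c j * g (t i - t j) := by
        simp only [closed, one_half_div_cosh_sub_add_one_half]
        rw [sq, sum_mul_sum, mul_sum, mul_sum, ← sum_add_distrib]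
        refine sum_congr rfl fun i _ => ?_
        rw [mul_sum, mul_sum, ← sum_add_distrib]
        exact sum_congr rfl fun j _ => by ring
end

section
/- For every positive definite matrix D and matrix X of the same size, ∫₀^∞ (D+tI)^{-1}·(DX − XD)·(D+tI)^{-1} dt = (log D)·X − X·(log D). -/
/-!
Diagonalise `A = U Λ U*` and write `X = U Y U*`. In the eigenbasis the integrand is the matrix
with entries `(λᵢ + t)⁻¹ (λᵢ - λⱼ) (λⱼ + t)⁻¹ Yᵢⱼ`, and `(λᵢ + t)⁻¹ (λᵢ - λⱼ) (λⱼ + t)⁻¹` is the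
derivative of `log (λⱼ + t) - log (λᵢ + t)`, which tends to `0` at infinity. Hence the entries
integrate to `(log λᵢ - log λⱼ) Yᵢⱼ`, the entries of `log Λ · Y - Y · log Λ`.
-/

open scoped ComplexOrder

attribute [local instance] Matrix.frobeniusNormedAddCommGroup Matrix.frobeniusNormedSpace

/-- Apply a real function to a Hermitian matrix via the spectral decomposition
(functional calculus); used here for the matrix logarithm. -/
noncomputable def hermApply {n : ℕ} (k : ℝ → ℝ) (A : Matrix (Fin n) (Fin n) ℂ)
    (hA : A.IsHermitian) : Matrix (Fin n) (Fin n) ℂ :=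
  (hA.eigenvectorUnitary : Matrix (Fin n) (Fin n) ℂ) *
    Matrix.diagonal (fun i => (k (hA.eigenvalues i) : ℂ)) *
    star (hA.eigenvectorUnitary : Matrix (Fin n) (Fin n) ℂ)

open MeasureTheory Set Filter Topology Unitary

theorem hasDerivAt_log_add_sub_log_add {a b x : ℝ} (ha : 0 < a + x) (hb : 0 < b + x) :
    HasDerivAt (fun t => Real.log (b + t) - Real.log (a + t))
      ((a + x)⁻¹ * (a - b) * (b + x)⁻¹) x := by
  refine ((((hasDerivAt_id' x).const_add b).log hb.ne').sub
    (((hasDerivAt_id' x).const_add a).log ha.ne')).congr_deriv ?_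
  field_simp
  ring

theorem tendsto_log_add_sub_log_add (a b : ℝ) :
    Tendsto (fun t => Real.log (b + t) - Real.log (a + t)) atTop (𝓝 0) := by
  have h : Tendsto (fun t => 1 + (b - a) / (a + t)) atTop (𝓝 1) := by
    simpa using tendsto_const_nhds.add
      ((tendsto_atTop_add_const_left _ a tendsto_id).const_div_atTop (b - a))
  have hlog := (Real.continuousAt_log one_ne_zero).tendsto.comp h
  rw [Real.log_one] at hlog
  refine hlog.congr' ?_
  filter_upwards [eventually_gt_atTop (-a), eventually_gt_atTop (-b)] with t hta htb
  have hat : 0 < a + t := by linarith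
  rw [Function.comp_apply, ← Real.log_div (by linarith) hat.ne']
  congr 1
  field_simp
  ring

/-- The integrand has constant sign, so its integrability follows from the convergence of the
primitive `log (b + t) - log (a + t)` at infinity. -/
theorem integrableOn_Ioi_inv_add_mul_sub_mul_inv_add {a b : ℝ} (ha : 0 < a) (hb : 0 < b) :
    IntegrableOn (fun t => (a + t)⁻¹ * (a - b) * (b + t)⁻¹) (Ioi 0) := by
  have hderiv (x : ℝ) (hx : x ∈ Ici 0) := hasDerivAt_log_add_sub_log_add
    (a := a) (b := b) (x := x) (by linarith [hx.out]) (by linarith [hx.out])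
  rcases le_total b a with hab | hab
  · refine integrableOn_Ioi_deriv_of_nonneg' hderiv (fun x hx => ?_)
      (tendsto_log_add_sub_log_add a b)
    exact mul_nonneg (mul_nonneg (inv_nonneg.2 (by linarith [hx.out])) (sub_nonneg.2 hab))
      (inv_nonneg.2 (by linarith [hx.out]))
  · refine integrableOn_Ioi_deriv_of_nonpos' hderiv (fun x hx => ?_)
      (tendsto_log_add_sub_log_add a b)
    exact mul_nonpos_of_nonpos_of_nonneg
      (mul_nonpos_of_nonneg_of_nonpos (inv_nonneg.2 (by linarith [hx.out])) (sub_nonpos.2 hab))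
      (inv_nonneg.2 (by linarith [hx.out]))

theorem integral_Ioi_inv_add_mul_sub_mul_inv_add {a b : ℝ} (ha : 0 < a) (hb : 0 < b) :
    ∫ t in Ioi 0, (a + t)⁻¹ * (a - b) * (b + t)⁻¹ = Real.log a - Real.log b := by
  rw [integral_Ioi_of_hasDerivAt_of_tendsto'
    (fun x hx => hasDerivAt_log_add_sub_log_add (by linarith [hx.out]) (by linarith [hx.out]))
    (integrableOn_Ioi_inv_add_mul_sub_mul_inv_add ha hb) (tendsto_log_add_sub_log_add a b)]
  simp

theorem ofReal_inv_add_mul_sub_mul_inv_add {𝕜 : Type*} [RCLike 𝕜] (a b t : ℝ) :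
    ((a : 𝕜) + t)⁻¹ * (a - b) * ((b : 𝕜) + t)⁻¹ =
      (((a + t)⁻¹ * (a - b) * (b + t)⁻¹ : ℝ) : 𝕜) := by
  push_cast
  rfl

namespace Matrix

variable {m n : Type*} [Fintype m] [Fintype n] [DecidableEq m] [DecidableEq n]

theorem conjStarAlgAut_nonsing_inv {S α : Type*} [CommRing α] [StarRing α]
    [SMul S (Matrix n n α)] [IsScalarTower S (Matrix n n α) (Matrix n n α)]
    [SMulCommClass S (Matrix n n α) (Matrix n n α)] (U : unitary (Matrix n n α))
    (A : Matrix n n α) :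
    conjStarAlgAut S _ U A⁻¹ = (conjStarAlgAut S _ U A)⁻¹ := by
  have hU : (U : Matrix n n α)⁻¹ = star (U : Matrix n n α) :=
    inv_eq_left_inv (Unitary.coe_star_mul_self U)
  have hU' : (star (U : Matrix n n α))⁻¹ = U := inv_eq_left_inv (Unitary.coe_mul_star_self U)
  simp only [conjStarAlgAut_apply, mul_inv_rev, hU, hU', mul_assoc]

theorem inv_diagonal_of_ne_zero {K : Type*} [Field K] {a : n → K} (ha : ∀ i, a i ≠ 0) :
    (diagonal a)⁻¹ = diagonal fun i => (a i)⁻¹ :=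
  inv_eq_left_inv <| by simp [diagonal_mul_diagonal, inv_mul_cancel₀ (ha _)]

theorem inv_mul_commutator_mul_inv_diagonal_add_smul {K : Type*} [Field K] (a : n → K) (c : K)
    (hc : ∀ i, a i + c ≠ 0) (Y : Matrix n n K) :
    (diagonal a + c • 1)⁻¹ * (diagonal a * Y - Y * diagonal a) * (diagonal a + c • 1)⁻¹ =
      of fun i j => (a i + c)⁻¹ * (a i - a j) * (a j + c)⁻¹ * Y i j := by
  rw [smul_one_eq_diagonal, diagonal_add, inv_diagonal_of_ne_zero hc]
  ext i j
  simp only [mul_diagonal, diagonal_mul, sub_apply, of_apply]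
  ring

variable {α 𝕜 : Type*} [RCLike 𝕜] [MeasurableSpace α] {μ : Measure α}

theorem IsHermitian.inv_add_smul_mul_commutator_mul_inv_add_smul {A : Matrix n n 𝕜}
    (hA : A.IsHermitian) (Y : Matrix n n 𝕜) {c : 𝕜}
    (hc : ∀ i, (hA.eigenvalues i : 𝕜) + c ≠ 0) :
    (A + c • 1)⁻¹ *
        (A * conjStarAlgAut 𝕜 _ hA.eigenvectorUnitary Y -
          conjStarAlgAut 𝕜 _ hA.eigenvectorUnitary Y * A) * (A + c • 1)⁻¹ =
      conjStarAlgAut 𝕜 _ hA.eigenvectorUnitary (of fun i j =>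
        ((hA.eigenvalues i : 𝕜) + c)⁻¹ * (hA.eigenvalues i - hA.eigenvalues j : 𝕜) *
          ((hA.eigenvalues j : 𝕜) + c)⁻¹ * Y i j) := by
  have hAeq := hA.spectral_theorem
  generalize hA.eigenvectorUnitary = U at hAeq ⊢
  generalize hA.eigenvalues = l at hAeq hc ⊢
  subst hAeq
  rw [← inv_mul_commutator_mul_inv_diagonal_add_smul _ _ hc]
  simp only [map_mul, map_sub, map_add, map_smul, map_one, conjStarAlgAut_nonsing_inv,
    Function.comp_def]

theorem integral_of {f : α → m → n → 𝕜} (hf : ∀ i j, Integrable (fun a => f a i j) μ) :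
    ∫ a, of (f a) ∂μ = of fun i j => ∫ a, f a i j ∂μ := by
  -- The Frobenius norm induces the product topology only up to unfolding, so instance search
  -- does not find `ContinuousENorm` by itself.
  let _ : ContinuousENorm (Matrix m n 𝕜) := SeminormedAddGroup.toContinuousENorm
  have hsum (M : Matrix m n 𝕜) : M = ∑ i, ∑ j, M i j • single i j (1 : 𝕜) := by
    simpa only [smul_single, smul_eq_mul, mul_one] using matrix_eq_sum_single M
  have hint (i : m) (j : n) : Integrable (fun a => f a i j • single i j (1 : 𝕜)) μ :=
    (hf i j).smul_const _
  conv_lhs => enter [2, a]; rw [hsum (of (f a))]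
  simp only [of_apply]
  rw [integral_finsetSum _ fun i _ => integrable_finsetSum _ fun j _ => hint i j]
  simp only [integral_finsetSum _ fun j _ => hint _ j, integral_smul_const]
  exact (hsum _).symm

theorem integral_conjStarAlgAut (U : unitary (Matrix n n 𝕜)) (F : α → Matrix n n 𝕜) :
    ∫ a, conjStarAlgAut 𝕜 _ U (F a) ∂μ = conjStarAlgAut 𝕜 _ U (∫ a, F a ∂μ) :=
  (conjStarAlgAut 𝕜 _ U).toAlgEquiv.toLinearEquiv.toContinuousLinearEquiv.integral_comp_comm F

theorem PosDef.integral_Ioi_inv_add_smul_mul_commutator_mul_inv_add_smul {A : Matrix n n 𝕜}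
    (hA : A.PosDef) (X : Matrix n n 𝕜) :
    ∫ t in Ioi (0 : ℝ), (A + (t : 𝕜) • 1)⁻¹ * (A * X - X * A) * (A + (t : 𝕜) • 1)⁻¹ =
      cfc Real.log A * X - X * cfc Real.log A := by
  rw [hA.isHermitian.cfc_eq, IsHermitian.cfc]
  obtain ⟨Y, rfl⟩ : ∃ Y, conjStarAlgAut 𝕜 _ hA.isHermitian.eigenvectorUnitary Y = X :=
    (conjStarAlgAut 𝕜 _ _).surjective X
  have hpos (t : ℝ) (ht : t ∈ Ioi 0) (i : n) : (hA.isHermitian.eigenvalues i : 𝕜) + t ≠ 0 := by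
    exact_mod_cast (add_pos (hA.eigenvalues_pos i) ht).ne'
  have hint (i j : n) : IntegrableOn (fun t : ℝ =>
      ((hA.isHermitian.eigenvalues i : 𝕜) + t)⁻¹ *
        (hA.isHermitian.eigenvalues i - hA.isHermitian.eigenvalues j : 𝕜) *
        ((hA.isHermitian.eigenvalues j : 𝕜) + t)⁻¹ * Y i j) (Ioi 0) := by
    simp only [ofReal_inv_add_mul_sub_mul_inv_add]
    exact (integrableOn_Ioi_inv_add_mul_sub_mul_inv_add (hA.eigenvalues_pos i)
      (hA.eigenvalues_pos j)).ofReal.mul_const _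
  rw [setIntegral_congr_fun measurableSet_Ioi fun t ht =>
      hA.isHermitian.inv_add_smul_mul_commutator_mul_inv_add_smul Y (hpos t ht),
    integral_conjStarAlgAut, integral_of hint, ← map_mul, ← map_mul, ← map_sub]
  congr 1
  ext i j
  rw [of_apply, integral_mul_const]
  simp only [ofReal_inv_add_mul_sub_mul_inv_add, integral_ofReal,
    integral_Ioi_inv_add_mul_sub_mul_inv_add (hA.eigenvalues_pos i) (hA.eigenvalues_pos j),
    sub_apply, diagonal_mul, mul_diagonal, Function.comp_apply]
  push_cast
  ring

end Matrix

theorem stmt_19 {d : ℕ} (D X : Matrix (Fin d) (Fin d) ℂ) (hD : D.PosDef) :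
    ∫ t in Set.Ioi (0 : ℝ),
        (D + (t : ℂ) • 1)⁻¹ * (D * X - X * D) * (D + (t : ℂ) • 1)⁻¹ =
      hermApply Real.log D hD.isHermitian * X - X * hermApply Real.log D hD.isHermitian := by
  rw [show hermApply Real.log D hD.isHermitian = cfc Real.log D from
    (hD.isHermitian.cfc_eq Real.log).symm]
  exact hD.integral_Ioi_inv_add_smul_mul_commutator_mul_inv_add_smul X
end
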